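/- arXiv:2510.16097 — 4 statements merged into one kernel-verified Lean document; each statement's English description precedes it below -/
import Mathlib

section
/- Let g be the half-normal density with parameter σ > 0, i.e., g(y) = (√2/(σ√π))·exp(−y²/(2σ²)) for y ≥ 0 and g(y) = 0 for y < 0. For any δ ≥ 0, ∫₀^∞ |g(y + δ) − g(y)| dy ≤ δ·√2/(σ√π). -/
open Real MeasureTheory Set

/-!
Since `g` is non-increasing on `[0, ∞)`, the integrand is `g y - g (y + δ)`, so the integral
telescopes to `∫_{0}^{δ} g`, which is at most `δ · g 0 = δ · √2 / (σ √π)`.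
-/

section ShiftOnHalfLine

variable {E : Type*} [NormedAddCommGroup E]

theorem MeasureTheory.IntegrableOn.comp_add_right_Ioi {f : ℝ → E} {a δ : ℝ}
    (hf : IntegrableOn f (Ioi a)) (hδ : 0 ≤ δ) : IntegrableOn (fun x => f (x + δ)) (Ioi a) := by
  have hf' : IntegrableOn f ((· + δ) '' Ioi a) :=
    hf.mono_set (by rw [image_add_const_Ioi]; exact Ioi_subset_Ioi (le_add_of_nonneg_right hδ))
  exact ((measurePreserving_add_right volume δ).integrableOn_image
    (measurableEmbedding_addRight δ)).1 hf'

theorem setIntegral_Ioi_comp_add_right [NormedSpace ℝ E] (f : ℝ → E) (a δ : ℝ) :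
    ∫ x in Ioi a, f (x + δ) = ∫ x in Ioi (a + δ), f x := by
  rw [← image_add_const_Ioi, (measurePreserving_add_right volume δ).setIntegral_image_emb
    (measurableEmbedding_addRight δ)]

end ShiftOnHalfLine

theorem setIntegral_Ioi_abs_sub_comp_add_le {g : ℝ → ℝ} {a δ : ℝ} (hg : IntegrableOn g (Ioi a))
    (hanti : AntitoneOn g (Ici a)) (hδ : 0 ≤ δ) :
    ∫ y in Ioi a, |g (y + δ) - g y| ≤ δ * g a := by
  have habs : EqOn (fun y => |g (y + δ) - g y|) (fun y => g y - g (y + δ)) (Ioi a) :=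
    fun y (hy : a < y) => by
      have : g (y + δ) ≤ g y := hanti (mem_Ici.2 hy.le)
        (mem_Ici.2 (by linarith)) (le_add_of_nonneg_right hδ)
      simp only [abs_of_nonpos (sub_nonpos.2 this), neg_sub]
  have hab : a ≤ a + δ := le_add_of_nonneg_right hδ
  have hanti' : AntitoneOn g (uIcc a (a + δ)) :=
    hanti.mono (by rw [uIcc_of_le hab]; exact Icc_subset_Ici_self)
  calc ∫ y in Ioi a, |g (y + δ) - g y|
      = (∫ y in Ioi a, g y) - ∫ y in Ioi (a + δ), g y := by
        rw [setIntegral_congr_fun measurableSet_Ioi habs,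
          integral_sub hg (hg.comp_add_right_Ioi hδ), setIntegral_Ioi_comp_add_right]
    _ = ∫ y in a..a + δ, g y := intervalIntegral.integral_Ioi_sub_Ioi hg hab
    _ ≤ ∫ _ in a..a + δ, g a :=
        intervalIntegral.integral_mono_on hab hanti'.intervalIntegrable
          intervalIntegrable_const fun y hy => hanti self_mem_Ici (mem_Ici.2 hy.1) hy.1
    _ = δ * g a := by simp

theorem antitoneOn_exp_neg_sq_div {b : ℝ} (hb : 0 ≤ b) :
    AntitoneOn (fun y => exp (-(y ^ 2) / b)) (Ici 0) :=
  fun _ hx _ _ hxy => exp_le_exp.2 <|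
    div_le_div_of_nonneg_right (neg_le_neg (pow_le_pow_left₀ hx hxy 2)) hb

/-- Shift bound for the half-normal density: for `δ ≥ 0`,
`∫₀^∞ |g(y+δ) − g(y)| dy ≤ δ·√2/(σ√π)`. -/
theorem halfnormal_shift_bound (σ : ℝ) (hσ : 0 < σ) (δ : ℝ) (hδ : 0 ≤ δ)
    (g : ℝ → ℝ)
    (hg : ∀ y : ℝ, g y =
      if 0 ≤ y then Real.sqrt 2 / (σ * Real.sqrt π) * Real.exp (-(y ^ 2) / (2 * σ ^ 2)) else 0) :
    ∫ y in Set.Ioi (0 : ℝ), |g (y + δ) - g y| ≤ δ * (Real.sqrt 2 / (σ * Real.sqrt π)) := by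
  set c := Real.sqrt 2 / (σ * Real.sqrt π)
  have hg_eq : EqOn (fun y => c * exp (-(y ^ 2) / (2 * σ ^ 2))) g (Ici 0) :=
    fun y (hy : 0 ≤ y) => by simp only [hg y, if_pos hy]
  have hint : IntegrableOn g (Ioi 0) := by
    have hgauss := (integrable_exp_neg_mul_sq (b := 1 / (2 * σ ^ 2)) (by positivity)).const_mul c
    refine (hgauss.integrableOn.congr_fun (fun y _ => ?_) measurableSet_Ioi).congr_fun
      (hg_eq.mono Ioi_subset_Ici_self) measurableSet_Ioi
    ring_nf
  have hanti : AntitoneOn g (Ici 0) := fun x hx y hy hxy => by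
    rw [← hg_eq hx, ← hg_eq hy]
    have hc : 0 ≤ c := by positivity
    exact mul_le_mul_of_nonneg_left (antitoneOn_exp_neg_sq_div (by positivity) hx hy hxy) hc
  calc ∫ y in Ioi 0, |g (y + δ) - g y| ≤ δ * g 0 :=
        setIntegral_Ioi_abs_sub_comp_add_le hint hanti hδ
    _ = δ * c := by simp [hg 0, c]
end

section
/- Let W be a half-normal random variable with parameter σ > 0 (i.e., W = |X| with X ~ N(0,σ²)). Let −∞ ≤ Δ₁ ≤ Δ₂ ≤ ... ≤ Δ_{m+1} = +∞ be an increasing sequence of extended reals with Δ₁ = 0. For ε ∈ [0,1] define pᵢ(ε) = P[Δᵢ − ε ≤ W < Δ_{i+1} − ε] for i = 1,...,m. Then for any ε, ε' ∈ [0,1], ∑_{i=1}^m |pᵢ(ε) − pᵢ(ε')| ≤ (2√2/(σ√π))·|ε − ε'|. -/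
/-
Write `pᵢ(ε) = F_ε(Δᵢ₊₁) - F_ε(Δᵢ)` with `F_ε(a) = P(|X| + ε < a)`, so that the differences
`pᵢ(ε) - pᵢ(ε')` are the increments of `D = F_ε - F_ε'` along the monotone sequence `Δ`.
For `ε ≤ ε'`, `D a` is the mass of the annulus `a - ε' ≤ |X| < a - ε`: it grows while `a ≤ ε'`,
and, the Gaussian density being decreasing in `|x|`, it shrinks once `a ≥ ε'`. A nonnegative
unimodal function has total variation at most twice its peak
`D ε' = P(|X| < ε' - ε) ≤ 2 (ε' - ε) / √(2πσ²)`.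
-/

open Real MeasureTheory ProbabilityTheory Set
open scoped NNReal

section Unimodal

variable {α : Type*} [LinearOrder α] {f : α → ℝ} {c : α}

theorem MonotoneOn.eVariationOn_Iic_eq [OrderBot α] (hf : MonotoneOn f (Iic c)) :
    eVariationOn f (Iic c) = ENNReal.ofReal (f c - f ⊥) := by
  simpa [Icc_bot] using hf.eVariationOn_eq (bot_le : ⊥ ∈ Iic c) (le_refl c)

theorem AntitoneOn.eVariationOn_Ici_eq [OrderTop α] (hf : AntitoneOn f (Ici c)) :
    eVariationOn f (Ici c) = ENNReal.ofReal (f c - f ⊤) := by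
  rw [← eVariationOn.comp_ofDual]
  exact MonotoneOn.eVariationOn_Iic_eq (α := αᵒᵈ) (c := OrderDual.toDual c) hf.dual_left

theorem eVariationOn_univ_le_of_unimodal [OrderBot α] [OrderTop α]
    (hmono : MonotoneOn f (Iic c)) (hanti : AntitoneOn f (Ici c))
    (hbot : 0 ≤ f ⊥) (htop : 0 ≤ f ⊤) :
    eVariationOn f univ ≤ ENNReal.ofReal (2 * f c) := by
  rw [← Iic_union_Ici (a := c), eVariationOn.union f isGreatest_Iic isLeast_Ici,
    hmono.eVariationOn_Iic_eq, hanti.eVariationOn_Ici_eq,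
    ← ENNReal.ofReal_add (by linarith [hmono bot_le le_rfl bot_le])
      (by linarith [hanti le_rfl le_top le_top])]
  exact ENNReal.ofReal_le_ofReal (by linarith)

theorem ofReal_sum_abs_sub_le_eVariationOn {m : ℕ} {u : Fin (m + 1) → α} (hu : Monotone u) :
    ENNReal.ofReal (∑ i : Fin m, |f (u i.succ) - f (u i.castSucc)|) ≤ eVariationOn f univ := by
  refine le_trans (le_of_eq ?_)
    (eVariationOn.sum_le (f := f) (n := m) (hu.comp Fin.clamp_monotone) fun _ => mem_univ _)
  rw [ENNReal.ofReal_sum_of_nonneg fun _ _ => abs_nonneg _, Finset.sum_range]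
  refine Finset.sum_congr rfl fun i _ => ?_
  rw [edist_dist, Real.dist_eq]
  congr 5 <;> ext <;> simp [Fin.clamp]

theorem sum_abs_sub_le_of_unimodal [OrderBot α] [OrderTop α]
    (hmono : MonotoneOn f (Iic c)) (hanti : AntitoneOn f (Ici c))
    (hbot : 0 ≤ f ⊥) (htop : 0 ≤ f ⊤) {m : ℕ} {u : Fin (m + 1) → α} (hu : Monotone u) :
    ∑ i : Fin m, |f (u i.succ) - f (u i.castSucc)| ≤ 2 * f c := by
  have hc : 0 ≤ f c := by linarith [hmono bot_le le_rfl bot_le]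
  rw [← ENNReal.ofReal_le_ofReal_iff (by positivity)]
  exact (ofReal_sum_abs_sub_le_eVariationOn hu).trans
    (eVariationOn_univ_le_of_unimodal hmono hanti hbot htop)

end Unimodal

theorem AntitoneOn.antitoneOn_intervalIntegral_add {f : ℝ → ℝ} {a δ : ℝ}
    (hf : AntitoneOn f (Ici a)) (hδ : 0 ≤ δ) :
    AntitoneOn (fun s => ∫ x in s..s + δ, f x) (Ici a) := by
  intro s (hs : a ≤ s) s' _ hss'
  have hwin : uIcc s (s + δ) ⊆ Ici a := by
    rw [uIcc_of_le (by linarith)]; exact fun x hx => hs.trans hx.1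
  have hshift : ∀ x ∈ Ici a, x + (s' - s) ∈ Ici a := fun x (hx : a ≤ x) =>
    show a ≤ x + (s' - s) by linarith
  calc ∫ x in s'..s' + δ, f x = ∫ x in s..s + δ, f (x + (s' - s)) := by
        rw [intervalIntegral.integral_comp_add_right]; congr 1 <;> ring
    _ ≤ ∫ x in s..s + δ, f x :=
        intervalIntegral.integral_mono_on (by linarith)
          (AntitoneOn.intervalIntegrable fun x hx y hy hxy =>
            hf (hshift x (hwin hx)) (hshift y (hwin hy)) (by linarith))
          (hf.mono hwin).intervalIntegrable fun x hx =>
            hf (hwin (Icc_subset_uIcc hx)) (hshift x (hwin (Icc_subset_uIcc hx))) (by linarith)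

theorem measureReal_setOf_le_and_lt {Ω β : Type*} [MeasurableSpace Ω] [LinearOrder β]
    [TopologicalSpace β] [OrderClosedTopology β] [MeasurableSpace β] [OpensMeasurableSpace β]
    (μ : Measure Ω) [IsFiniteMeasure μ] {g : Ω → β} (hg : Measurable g) {a b : β} (hab : a ≤ b) :
    μ.real {x | a ≤ g x ∧ g x < b} = μ.real {x | g x < b} - μ.real {x | g x < a} := by
  have hset : {x | a ≤ g x ∧ g x < b} = {x | g x < b} \ {x | g x < a} := by
    ext x; simp only [mem_ofPred_eq, mem_sdiff, not_lt]; exact and_comm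
  rw [hset]
  exact measureReal_sdiff (fun x (hx : g x < a) => hx.trans_le hab) (hg measurableSet_Iio)

section Gaussian

variable {v : ℝ≥0}

theorem gaussianPDFReal_zero_le_of_abs_le {x y : ℝ} (h : |x| ≤ |y|) :
    gaussianPDFReal 0 v y ≤ gaussianPDFReal 0 v x := by
  simp only [gaussianPDFReal, sub_zero]
  gcongr _ * rexp (-?_ / _)
  exact sq_le_sq.mpr h

theorem gaussianPDFReal_zero_antitoneOn : AntitoneOn (gaussianPDFReal 0 v) (Ici 0) :=
  fun x hx y hy hxy => gaussianPDFReal_zero_le_of_abs_le <| by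
    rwa [abs_of_nonneg hx, abs_of_nonneg hy]

theorem gaussianPDFReal_zero_le_inv_sqrt (x : ℝ) : gaussianPDFReal 0 v x ≤ (√(2 * π * v))⁻¹ := by
  simpa [gaussianPDFReal] using
    gaussianPDFReal_zero_le_of_abs_le (v := v) (x := 0) (abs_zero.trans_le (abs_nonneg x))

theorem gaussianReal_real_abs_mem_Ico (hv : v ≠ 0) {s t : ℝ} (hs : 0 ≤ s) (hst : s ≤ t) :
    (gaussianReal 0 v).real {x | s ≤ |x| ∧ |x| < t} = 2 * ∫ x in s..t, gaussianPDFReal 0 v x := by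
  have hind : ∀ x, {x : ℝ | s ≤ |x| ∧ |x| < t}.indicator (gaussianPDFReal 0 v) x
      = (Ico s t).indicator (gaussianPDFReal 0 v) |x| := by
    intro x
    simp only [indicator, mem_ofPred_eq, mem_Ico]
    congr 1
    simp [gaussianPDFReal]
  have hmeas : MeasurableSet {x : ℝ | s ≤ |x| ∧ |x| < t} :=
    measurableSet_Ico.preimage continuous_abs.measurable
  rw [measureReal_def, gaussianReal_apply_eq_integral 0 hv,
    ENNReal.toReal_ofReal (setIntegral_nonneg hmeas fun x _ => gaussianPDFReal_nonneg 0 v x),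
    ← integral_indicator hmeas, funext hind, integral_comp_abs, ← integral_Ici_eq_integral_Ioi,
    setIntegral_indicator measurableSet_Ico,
    inter_eq_right.mpr (Ico_subset_Ici_self.trans (Ici_subset_Ici.mpr hs)),
    integral_Ico_eq_integral_Ioc, intervalIntegral.integral_of_le hst]

theorem antitoneOn_gaussianReal_real_annulus (hv : v ≠ 0) {δ : ℝ} (hδ : 0 ≤ δ) :
    AntitoneOn (fun s => (gaussianReal 0 v).real {x | s ≤ |x| ∧ |x| < s + δ}) (Ici 0) := by
  intro s (hs : 0 ≤ s) s' (hs' : 0 ≤ s') hss'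
  dsimp only
  rw [gaussianReal_real_abs_mem_Ico hv hs (by linarith),
    gaussianReal_real_abs_mem_Ico hv hs' (by linarith)]
  gcongr 2 * ?_
  exact gaussianPDFReal_zero_antitoneOn.antitoneOn_intervalIntegral_add hδ hs hs' hss'

end Gaussian

theorem setOf_abs_add_lt_subset {ε ε' : ℝ} (hε : ε ≤ ε') (a : EReal) :
    {x : ℝ | ((|x| + ε' : ℝ) : EReal) < a} ⊆ {x | ((|x| + ε : ℝ) : EReal) < a} :=
  fun x (hx : ((|x| + ε' : ℝ) : EReal) < a) =>
    (EReal.coe_le_coe_iff.mpr (by linarith)).trans_lt hx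

/-- `D = F_ε - F_ε'`, whose increments along `Δ` are the differences `pᵢ(ε) - pᵢ(ε')`. -/
noncomputable def absShiftGap (v : ℝ≥0) (ε ε' : ℝ) (a : EReal) : ℝ :=
  (gaussianReal 0 v).real {x | ((|x| + ε : ℝ) : EReal) < a} -
    (gaussianReal 0 v).real {x | ((|x| + ε' : ℝ) : EReal) < a}

namespace absShiftGap

variable {v : ℝ≥0} {ε ε' : ℝ}

@[simp] theorem bot : absShiftGap v ε ε' ⊥ = 0 := by simp [absShiftGap]

@[simp] theorem top : absShiftGap v ε ε' ⊤ = 0 := by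
  simp only [absShiftGap, EReal.coe_lt_top, ofPred_true, sub_self]

theorem nonneg (hε : ε ≤ ε') (a : EReal) : 0 ≤ absShiftGap v ε ε' a :=
  sub_nonneg.mpr <| measureReal_mono (setOf_abs_add_lt_subset hε a)

theorem coe (hε : ε ≤ ε') (a : ℝ) :
    absShiftGap v ε ε' a = (gaussianReal 0 v).real {x | a - ε' ≤ |x| ∧ |x| < a - ε} := by
  have hset : {x : ℝ | a - ε' ≤ |x| ∧ |x| < a - ε} =
      {x : ℝ | ((|x| + ε : ℝ) : EReal) < a} \ {x | ((|x| + ε' : ℝ) : EReal) < a} := by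
    ext x
    simp only [mem_ofPred_eq, mem_sdiff, EReal.coe_lt_coe_iff, not_lt]
    constructor <;> rintro ⟨h₁, h₂⟩ <;> constructor <;> linarith
  rw [hset, measureReal_sdiff (setOf_abs_add_lt_subset hε _)
    (measurableSet_lt (by fun_prop) (by fun_prop))]
  rfl

theorem sub_eq_measureReal_sub {a b : EReal} (hab : a ≤ b) :
    absShiftGap v ε ε' b - absShiftGap v ε ε' a =
      (gaussianReal 0 v).real {x | a ≤ ((|x| + ε : ℝ) : EReal) ∧ ((|x| + ε : ℝ) : EReal) < b} -
        (gaussianReal 0 v).real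
          {x | a ≤ ((|x| + ε' : ℝ) : EReal) ∧ ((|x| + ε' : ℝ) : EReal) < b} := by
  rw [measureReal_setOf_le_and_lt _ (by fun_prop) hab,
    measureReal_setOf_le_and_lt _ (by fun_prop) hab, absShiftGap, absShiftGap]
  ring

theorem monotoneOn : MonotoneOn (absShiftGap v ε ε') (Iic (ε' : EReal)) := by
  have hgap : ∀ a ∈ Iic (ε' : EReal),
      absShiftGap v ε ε' a = (gaussianReal 0 v).real {x | ((|x| + ε : ℝ) : EReal) < a} := by
    intro a (ha : a ≤ ε')
    have hempty : {x : ℝ | ((|x| + ε' : ℝ) : EReal) < a} = ∅ :=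
      eq_empty_of_forall_notMem fun x hx =>
        (ha.trans (EReal.coe_le_coe_iff.mpr (by linarith [abs_nonneg x]))).not_gt hx
    rw [absShiftGap, hempty, measureReal_empty, sub_zero]
  intro a ha b hb hab
  rw [hgap a ha, hgap b hb]
  exact measureReal_mono fun x (hx : _ < a) => hx.trans_le hab

theorem antitoneOn (hv : v ≠ 0) (hε : ε ≤ ε') :
    AntitoneOn (absShiftGap v ε ε') (Ici (ε' : EReal)) := by
  intro a (ha : (ε' : EReal) ≤ a) b _ hab
  induction b using EReal.rec with
  | bot => exact absurd (ha.trans hab) (by simp)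
  | top => simpa using nonneg hε a
  | coe b =>
    induction a using EReal.rec with
    | bot => exact absurd ha (by simp)
    | top => exact absurd hab (by simp)
    | coe a =>
      rw [EReal.coe_le_coe_iff] at ha hab
      have hwidth : ∀ c : ℝ, c - ε = c - ε' + (ε' - ε) := fun c => by ring
      rw [coe hε, coe hε, hwidth a, hwidth b]
      exact antitoneOn_gaussianReal_real_annulus hv (sub_nonneg.mpr hε)
        (sub_nonneg.mpr ha) (sub_nonneg.mpr (ha.trans hab)) (by linarith)

theorem peak_le (hv : v ≠ 0) (hε : ε ≤ ε') :
    absShiftGap v ε ε' ε' ≤ 2 * (ε' - ε) / √(2 * π * v) := by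
  have hδ : 0 ≤ ε' - ε := sub_nonneg.mpr hε
  rw [coe hε, sub_self, gaussianReal_real_abs_mem_Ico hv le_rfl hδ, mul_div_assoc, div_eq_mul_inv]
  gcongr
  calc ∫ x in 0..ε' - ε, gaussianPDFReal 0 v x
      ≤ ‖∫ x in 0..ε' - ε, gaussianPDFReal 0 v x‖ := Real.le_norm_self _
    _ ≤ (√(2 * π * v))⁻¹ * |ε' - ε - 0| :=
        intervalIntegral.norm_integral_le_of_norm_le_const fun x _ => by
          rw [Real.norm_of_nonneg (gaussianPDFReal_nonneg 0 v x)]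
          exact gaussianPDFReal_zero_le_inv_sqrt x
    _ = (ε' - ε) * (√(2 * π * v))⁻¹ := by rw [sub_zero, abs_of_nonneg hδ, mul_comm]

end absShiftGap

theorem halfnormal_interval_tv_bound_general (σ : ℝ) (hσ : 0 < σ) (m : ℕ)
    (Δ : Fin (m + 1) → EReal) (hmono : Monotone Δ)
    (v : NNReal) (hv : (v : ℝ) = σ ^ 2)
    (p : ℝ → Fin m → ℝ)
    (hp : ∀ (ε : ℝ) (i : Fin m), p ε i =
      ((gaussianReal 0 v) {x : ℝ | Δ i.castSucc ≤ ((|x| + ε : ℝ) : EReal) ∧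
        ((|x| + ε : ℝ) : EReal) < Δ i.succ}).toReal)
    (ε ε' : ℝ) :
    ∑ i : Fin m, |p ε i - p ε' i| ≤ 2 * Real.sqrt 2 / (σ * Real.sqrt π) * |ε - ε'| := by
  wlog hεε' : ε ≤ ε' generalizing ε ε'
  · rw [abs_sub_comm ε ε']
    simpa only [abs_sub_comm (p ε' _)] using this ε' ε (le_of_not_ge hεε')
  have hv0 : v ≠ 0 := by
    rintro rfl
    exact (pow_pos hσ 2).ne' (by simpa using hv.symm)
  have hp_sub : ∀ i, p ε i - p ε' i =
      absShiftGap v ε ε' (Δ i.succ) - absShiftGap v ε ε' (Δ i.castSucc) := fun i => by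
    rw [hp, hp, ← measureReal_def, ← measureReal_def,
      absShiftGap.sub_eq_measureReal_sub (hmono i.castSucc_le_succ)]
  have hsqrt : √(2 * π * v) = σ * √2 * √π := by
    rw [hv, mul_comm, sqrt_mul (by positivity), sqrt_sq hσ.le, sqrt_mul zero_le_two, mul_assoc]
  calc ∑ i : Fin m, |p ε i - p ε' i|
      = ∑ i : Fin m, |absShiftGap v ε ε' (Δ i.succ) - absShiftGap v ε ε' (Δ i.castSucc)| := by
        simp_rw [hp_sub]
    _ ≤ 2 * absShiftGap v ε ε' ε' :=
        sum_abs_sub_le_of_unimodal absShiftGap.monotoneOn (absShiftGap.antitoneOn hv0 hεε')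
          (by simp) (by simp) hmono
    _ ≤ 2 * (2 * (ε' - ε) / √(2 * π * v)) := by
        gcongr; exact absShiftGap.peak_le hv0 hεε'
    _ = 2 * √2 / (σ * √π) * |ε - ε'| := by
        rw [abs_sub_comm, abs_of_nonneg (sub_nonneg.mpr hεε'), hsqrt]
        field_simp
        rw [sq_sqrt zero_le_two]; ring

/-- Proposition 1: total variation bound for the distribution over intervals of a
half-normal random variable `W = |X|`, `X ~ N(0,σ²)`, under shifts `ε, ε' ∈ [0,1]`. -/
theorem halfnormal_interval_tv_bound (σ : ℝ) (hσ : 0 < σ) (m : ℕ) (hm : 1 ≤ m)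
    (Δ : Fin (m + 1) → EReal) (hmono : Monotone Δ)
    (h0 : Δ 0 = 0) (htop : Δ (Fin.last m) = ⊤)
    (v : NNReal) (hv : (v : ℝ) = σ ^ 2)
    (p : ℝ → Fin m → ℝ)
    (hp : ∀ (ε : ℝ) (i : Fin m), p ε i =
      ((gaussianReal 0 v) {x : ℝ | Δ i.castSucc ≤ ((|x| + ε : ℝ) : EReal) ∧
        ((|x| + ε : ℝ) : EReal) < Δ i.succ}).toReal)
    (ε ε' : ℝ) (hε : ε ∈ Set.Icc (0 : ℝ) 1) (hε' : ε' ∈ Set.Icc (0 : ℝ) 1) :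
    ∑ i : Fin m, |p ε i - p ε' i| ≤ 2 * Real.sqrt 2 / (σ * Real.sqrt π) * |ε - ε'| :=
  halfnormal_interval_tv_bound_general σ hσ m Δ hmono v hv p hp ε ε'
end

section
/- Let p : [0,1] → ℝ be L-Lipschitz, let ε* ∈ [0,1] maximize p over [0,1], and let I, I* ⊆ [0,1] be intervals of length l with midpoints ε_I and ε_{I*}, where ε* ∈ I*. Suppose estimates p̂(ε_I), p̂(ε_{I*}) satisfy |p̂(ε_I) − p(ε_I)| ≤ l and |p̂(ε_{I*}) − p(ε_{I*})| ≤ l. Then p̂(ε_I) − p̂(ε_{I*}) ≤ (2 + L/2)·l. -/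
/-!
The true value of any arm is at most that of the optimum, which by Lipschitz continuity exceeds
the value at the midpoint of the optimal interval by at most `L · l / 2`; each of the two estimates
adds an error of at most `l`.
-/

open Set

lemma mem_of_Icc_sub_add_subset {R : Type*} [AddCommGroup R] [LinearOrder R]
    [IsOrderedAddMonoid R] {S : Set R} {c r : R} (hr : 0 ≤ r)
    (h : Icc (c - r) (c + r) ⊆ S) : c ∈ S :=
  h (mem_Icc_iff_abs_le.mp (by simpa using hr))

section Lipschitz

variable {α : Type*} [PseudoMetricSpace α] {S : Set α} {p : α → ℝ} {L r : ℝ}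

lemma IsMaxOn.le_add_mul_of_dist_le {xstar : α} (hopt : IsMaxOn p S xstar) (hxstar : xstar ∈ S)
    (hL : 0 ≤ L) (hlip : ∀ x ∈ S, ∀ y ∈ S, |p x - p y| ≤ L * dist x y)
    {x c : α} (hx : x ∈ S) (hc : c ∈ S) (hdist : dist xstar c ≤ r) :
    p x ≤ p c + L * r :=
  calc p x ≤ p xstar := isMaxOn_iff.mp hopt x hx
    _ ≤ p c + L * dist xstar c := by linarith [le_of_abs_le (hlip xstar hxstar c hc)]
    _ ≤ p c + L * r := by gcongr

end Lipschitz

lemma sub_le_add_of_abs_sub_le {a b ahat bhat δ : ℝ}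
    (ha : |ahat - a| ≤ δ) (hb : |bhat - b| ≤ δ) :
    ahat - bhat ≤ a - b + 2 * δ := by
  linarith [le_of_abs_le ha, neg_le_of_abs_le hb]

/-- The interval containing the optimal arm is never eliminated: under the clean
event, the elimination rule cannot be triggered against the optimal interval. -/
theorem optimal_interval_not_eliminated
    (L l : ℝ) (hL : 0 ≤ L) (hl : 0 < l)
    (p : ℝ → ℝ)
    (hlip : ∀ x ∈ Set.Icc (0 : ℝ) 1, ∀ y ∈ Set.Icc (0 : ℝ) 1, |p x - p y| ≤ L * |x - y|)
    (εstar : ℝ) (hεstar : εstar ∈ Set.Icc (0 : ℝ) 1)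
    (hopt : ∀ ε ∈ Set.Icc (0 : ℝ) 1, p ε ≤ p εstar)
    (εI εIstar : ℝ)
    (hI : Set.Icc (εI - l / 2) (εI + l / 2) ⊆ Set.Icc (0 : ℝ) 1)
    (hIstar : Set.Icc (εIstar - l / 2) (εIstar + l / 2) ⊆ Set.Icc (0 : ℝ) 1)
    (hmem : εstar ∈ Set.Icc (εIstar - l / 2) (εIstar + l / 2))
    (phatI phatIstar : ℝ)
    (hestI : |phatI - p εI| ≤ l) (hestIstar : |phatIstar - p εIstar| ≤ l) :
    phatI - phatIstar ≤ (2 + L / 2) * l := by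
  have hhalf : 0 ≤ l / 2 := by positivity
  have hdist : dist εstar εIstar ≤ l / 2 := by
    rw [Real.dist_eq, abs_sub_comm]
    exact mem_Icc_iff_abs_le.mpr hmem
  have htrue : p εI ≤ p εIstar + L * (l / 2) :=
    (isMaxOn_iff.mpr hopt).le_add_mul_of_dist_le hεstar hL
      (by simpa only [Real.dist_eq] using hlip)
      (mem_of_Icc_sub_add_subset hhalf hI) (mem_of_Icc_sub_add_subset hhalf hIstar) hdist
  linarith [sub_le_add_of_abs_sub_le hestI hestIstar]
end

section
/- Let p : [0,1] → ℝ be L-Lipschitz with maximizer ε* ∈ [0,1]. Let I, I* ⊆ [0,1] be intervals of length l with midpoints ε_I, ε_{I*}, with ε* ∈ I*. Suppose |p̂(ε_I) − p(ε_I)| ≤ l, |p̂(ε_{I*}) − p(ε_{I*})| ≤ l, and p̂(ε_{I*}) − p̂(ε_I) ≤ (2 + L/2)·l (the interval I is not eliminated). Then for every ε ∈ I, p(ε*) − p(ε) ≤ (4 + 3L/2)·l. -/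
open Set

theorem le_add_mul_of_abs_sub_le {s : Set ℝ} {f : ℝ → ℝ} {L r x y : ℝ} (hL : 0 ≤ L)
    (hf : ∀ x ∈ s, ∀ y ∈ s, |f x - f y| ≤ L * |x - y|) (hx : x ∈ s) (hy : y ∈ s)
    (hxy : |x - y| ≤ r) : f x ≤ f y + L * r :=
  calc f x ≤ f y + L * |x - y| := by linarith [le_abs_self (f x - f y), hf x hx y hy]
    _ ≤ f y + L * r := by gcongr

theorem non_eliminated_optimality_gap_general
    (L l : ℝ) (hL : 0 ≤ L) (hl : 0 < l)
    (p : ℝ → ℝ)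
    (hlip : ∀ x ∈ Set.Icc (0 : ℝ) 1, ∀ y ∈ Set.Icc (0 : ℝ) 1, |p x - p y| ≤ L * |x - y|)
    (εstar : ℝ)
    (εI εIstar : ℝ)
    (hI : Set.Icc (εI - l / 2) (εI + l / 2) ⊆ Set.Icc (0 : ℝ) 1)
    (hIstar : Set.Icc (εIstar - l / 2) (εIstar + l / 2) ⊆ Set.Icc (0 : ℝ) 1)
    (hmem : εstar ∈ Set.Icc (εIstar - l / 2) (εIstar + l / 2))
    (phatI phatIstar : ℝ)
    (hestI : |phatI - p εI| ≤ l) (hestIstar : |phatIstar - p εIstar| ≤ l)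
    (hnotelim : phatIstar - phatI ≤ (2 + L / 2) * l) :
    ∀ ε ∈ Set.Icc (εI - l / 2) (εI + l / 2), p εstar - p ε ≤ (4 + 3 * L / 2) * l := by
  intro ε hε
  rw [sub_le_iff_le_add']
  have center_mem (c : ℝ) : c ∈ Icc (c - l / 2) (c + l / 2) :=
    mem_Icc_iff_abs_le.mp (by simp only [sub_self, abs_zero]; positivity)
  have hIstar_upper := (abs_sub_le_iff.mp hestIstar).2
  have hI_lower := (abs_sub_le_iff.mp hestI).1
  calc p εstar ≤ p εIstar + L * (l / 2) :=
        le_add_mul_of_abs_sub_le hL hlip (hIstar hmem) (hIstar (center_mem εIstar))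
          (abs_sub_comm εstar εIstar ▸ mem_Icc_iff_abs_le.mpr hmem)
    -- p εIstar ≤ phatIstar + l ≤ phatI + (3 + L / 2) * l ≤ p εI + (4 + L / 2) * l
    _ ≤ p εI + (4 + L) * l := by linarith
    _ ≤ p ε + L * (l / 2) + (4 + L) * l := by
        gcongr
        exact le_add_mul_of_abs_sub_le hL hlip (hI (center_mem εI)) (hI hε)
          (mem_Icc_iff_abs_le.mpr hε)
    _ = p ε + (4 + 3 * L / 2) * l := by ring

/-- Optimality-gap bound for arms in non-eliminated intervals of the zooming
algorithm. -/
theorem non_eliminated_optimality_gap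
    (L l : ℝ) (hL : 0 ≤ L) (hl : 0 < l)
    (p : ℝ → ℝ)
    (hlip : ∀ x ∈ Set.Icc (0 : ℝ) 1, ∀ y ∈ Set.Icc (0 : ℝ) 1, |p x - p y| ≤ L * |x - y|)
    (εstar : ℝ) (hεstar : εstar ∈ Set.Icc (0 : ℝ) 1)
    (hopt : ∀ ε ∈ Set.Icc (0 : ℝ) 1, p ε ≤ p εstar)
    (εI εIstar : ℝ)
    (hI : Set.Icc (εI - l / 2) (εI + l / 2) ⊆ Set.Icc (0 : ℝ) 1)
    (hIstar : Set.Icc (εIstar - l / 2) (εIstar + l / 2) ⊆ Set.Icc (0 : ℝ) 1)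
    (hmem : εstar ∈ Set.Icc (εIstar - l / 2) (εIstar + l / 2))
    (phatI phatIstar : ℝ)
    (hestI : |phatI - p εI| ≤ l) (hestIstar : |phatIstar - p εIstar| ≤ l)
    (hnotelim : phatIstar - phatI ≤ (2 + L / 2) * l) :
    ∀ ε ∈ Set.Icc (εI - l / 2) (εI + l / 2), p εstar - p ε ≤ (4 + 3 * L / 2) * l :=
  non_eliminated_optimality_gap_general L l hL hl p hlip εstar εI εIstar hI hIstar hmem phatI
    phatIstar hestI hestIstar hnotelim
end
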